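/- Let X be a topological space, let s and t be disjoint closed subsets of X, and let f : X → I be a continuous map with f(s) ⊆ {0} and f(t) ⊆ {1}. Define λ : X → I₀¹ by λ(x) = Sum.inr false if x ∈ s, λ(x) = Sum.inr true if x ∈ t, and λ(x) = Sum.inl (f x) otherwise. Then λ is continuous, ι ∘ λ = f (as maps into I, after composing f with Sum.inl where needed), and π ∘ λ sends each x ∈ s to L, each x ∈ t to R, and every other point to c. -/

import Mathlib

open unitInterval

/-- The interval with doubled endpoints: `[0,1]` together with extra points
`0' = Sum.inr false` and `1' = Sum.inr true`, with `0 ⤳ 0'` and `1 ⤳ 1'`. -/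
def I01 : Type := unitInterval ⊕ Bool

instance : TopologicalSpace I01 where
  IsOpen U := IsOpen (Sum.inl ⁻¹' U : Set unitInterval) ∧
    (Sum.inr false ∈ U → Sum.inl (0 : unitInterval) ∈ U) ∧
    (Sum.inr true ∈ U → Sum.inl (1 : unitInterval) ∈ U)
  isOpen_univ := ⟨isOpen_univ, fun _ => trivial, fun _ => trivial⟩
  isOpen_inter U V hU hV := ⟨hU.1.inter hV.1,
    fun h => ⟨hU.2.1 h.1, hV.2.1 h.2⟩, fun h => ⟨hU.2.2 h.1, hV.2.2 h.2⟩⟩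
  isOpen_sUnion S hS := by
    refine ⟨?_, ?_, ?_⟩
    · convert isOpen_biUnion fun U hU => (hS U hU).1 using 1
      ext x
      exact ⟨fun ⟨U, hU, h⟩ => Set.mem_biUnion hU h, fun h => by
        obtain ⟨U, hU, h⟩ := Set.mem_iUnion₂.1 h
        exact ⟨U, hU, h⟩⟩
    · rintro ⟨U, hU, hmem⟩
      exact ⟨U, hU, (hS U hU).2.1 hmem⟩
    · rintro ⟨U, hU, hmem⟩
      exact ⟨U, hU, (hS U hU).2.2 hmem⟩

/-- The three-point space with an open point `c` and two closed points `L`, `R`. -/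
inductive V : Type
  | L | c | R

instance : TopologicalSpace V where
  IsOpen U := (V.L ∈ U → V.c ∈ U) ∧ (V.R ∈ U → V.c ∈ U)
  isOpen_univ := ⟨fun _ => trivial, fun _ => trivial⟩
  isOpen_inter U W hU hW := ⟨fun h => ⟨hU.1 h.1, hW.1 h.2⟩, fun h => ⟨hU.2 h.1, hW.2 h.2⟩⟩
  isOpen_sUnion S hS := by
    constructor
    · rintro ⟨U, hU, hmem⟩
      exact ⟨U, hU, (hS U hU).1 hmem⟩
    · rintro ⟨U, hU, hmem⟩
      exact ⟨U, hU, (hS U hU).2 hmem⟩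

/-- The map `π : I₀¹ → V` collapsing `[0,1]` to the open point `c`. -/
def pi1 : I01 → V
  | Sum.inl _ => V.c
  | Sum.inr false => V.L
  | Sum.inr true => V.R

/-- The map `ι : I₀¹ → [0,1]` collapsing the doubled endpoints. -/
def iota : I01 → unitInterval
  | Sum.inl x => x
  | Sum.inr false => 0
  | Sum.inr true => 1

/-! `(ι, π) : I₀¹ → I × V` is an inducing map, so `λ` is continuous as soon as `ι ∘ λ = f` and
`π ∘ λ` are. A map into `V` is continuous exactly when its fibres over the closed points `L` and
`R` are closed, and for `π ∘ λ` these fibres are `s` and `t`. -/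
open Topology

theorem continuous_iota : Continuous iota :=
  continuous_def.2 fun _ hU => ⟨hU, fun h => h, fun h => h⟩

theorem continuous_pi1 : Continuous pi1 :=
  continuous_def.2 fun U ⟨hL, hR⟩ =>
    ⟨(isOpen_const : IsOpen {_x : unitInterval | V.c ∈ U}), hL, hR⟩

theorem isInducing_iota_prodMk_pi1 : IsInducing fun p => (iota p, pi1 p) := by
  refine ⟨le_antisymm (continuous_iff_le_induced.1 (continuous_iota.prodMk continuous_pi1)) ?_⟩
  rintro U ⟨hU, h0, h1⟩
  let B : Set V := {v | match v with
    | V.L => Sum.inr false ∈ U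
    | V.c => True
    | V.R => Sum.inr true ∈ U}
  refine isOpen_induced_iff.2
    ⟨(Sum.inl ⁻¹' U) ×ˢ B, hU.prod ⟨fun _ => trivial, fun _ => trivial⟩, ?_⟩
  ext (x | _ | _)
  · exact ⟨And.left, fun h => ⟨h, trivial⟩⟩
  · exact ⟨And.right, fun h => ⟨h0 h, h⟩⟩
  · exact ⟨And.right, fun h => ⟨h1 h, h⟩⟩

theorem isClosed_singleton_L : IsClosed {V.L} := ⟨⟨by simp, fun _ => by simp⟩⟩

theorem isClosed_singleton_R : IsClosed {V.R} := ⟨⟨fun _ => by simp, by simp⟩⟩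

theorem continuous_to_V_iff {X : Type*} [TopologicalSpace X] {g : X → V} :
    Continuous g ↔ IsClosed (g ⁻¹' {V.L}) ∧ IsClosed (g ⁻¹' {V.R}) := by
  refine ⟨fun hg => ⟨isClosed_singleton_L.preimage hg, isClosed_singleton_R.preimage hg⟩,
    fun ⟨hL, hR⟩ => continuous_def.2 fun U ⟨hLc, hRc⟩ => ?_⟩
  by_cases hc : V.c ∈ U
  · rw [← compl_compl U, Set.preimage_compl, isOpen_compl_iff, ← Set.biUnion_of_singleton Uᶜ,
      Set.preimage_iUnion₂]
    have hfin : Uᶜ.Finite :=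
      (Set.toFinite {V.L, V.R}).subset fun v hv => by cases v <;> simp_all
    refine hfin.isClosed_biUnion fun v hv => ?_
    cases v
    · exact hL
    · exact absurd hc hv
    · exact hR
  · have : U = ∅ := Set.eq_empty_of_forall_notMem fun v hv => by cases v <;> tauto
    simp [this]

theorem lift_of_urysohn_function_general (X : Type) [TopologicalSpace X] (s t : Set X)
    (hs : IsClosed s) (ht : IsClosed t)
    (f : X → unitInterval) (hf : Continuous f)
    (hf0 : ∀ x ∈ s, f x = 0) (hf1 : ∀ x ∈ t, f x = 1)
    (lam : X → I01)
    (hlam_s : ∀ x ∈ s, lam x = Sum.inr false)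
    (hlam_t : ∀ x ∈ t, lam x = Sum.inr true)
    (hlam_o : ∀ x, x ∉ s → x ∉ t → lam x = Sum.inl (f x)) :
    Continuous lam ∧ iota ∘ lam = f ∧
      (∀ x ∈ s, pi1 (lam x) = V.L) ∧ (∀ x ∈ t, pi1 (lam x) = V.R) ∧
      (∀ x, x ∉ s → x ∉ t → pi1 (lam x) = V.c) := by
  have hpi_s : ∀ x ∈ s, pi1 (lam x) = V.L := fun x hx => by rw [hlam_s x hx]; rfl
  have hpi_t : ∀ x ∈ t, pi1 (lam x) = V.R := fun x hx => by rw [hlam_t x hx]; rfl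
  have hpi_o : ∀ x, x ∉ s → x ∉ t → pi1 (lam x) = V.c := fun x hs ht => by
    rw [hlam_o x hs ht]; rfl
  have hiota : iota ∘ lam = f := funext fun x => by
    by_cases hxs : x ∈ s
    · rw [Function.comp_apply, hlam_s x hxs, hf0 x hxs]; rfl
    by_cases hxt : x ∈ t
    · rw [Function.comp_apply, hlam_t x hxt, hf1 x hxt]; rfl
    · rw [Function.comp_apply, hlam_o x hxs hxt]; rfl
  have hL : (pi1 ∘ lam) ⁻¹' {V.L} = s := by
    ext x
    by_cases hxs : x ∈ s
    · simp [hxs, hpi_s x hxs]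
    by_cases hxt : x ∈ t <;> simp [hxs, hxt, hpi_t, hpi_o]
  have hR : (pi1 ∘ lam) ⁻¹' {V.R} = t := by
    ext x
    by_cases hxt : x ∈ t
    · simp [hxt, hpi_t x hxt]
    by_cases hxs : x ∈ s <;> simp [hxs, hxt, hpi_s, hpi_o]
  have hcont : Continuous lam := isInducing_iota_prodMk_pi1.continuous_iff.2 <|
    (hiota ▸ hf).prodMk (continuous_to_V_iff.2 ⟨hL ▸ hs, hR ▸ ht⟩)
  exact ⟨hcont, hiota, hpi_s, hpi_t, hpi_o⟩

/-- given disjoint closed `s, t` and a continuous `f : X → [0,1]` with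
`f(s) ⊆ {0}`, `f(t) ⊆ {1}`, the map `λ` sending `s` to `0'`, `t` to `1'`, and every other
point `x` to `f x ∈ [0,1]` is continuous, satisfies `ι ∘ λ = f`, and `π ∘ λ` sends `s` to
`L`, `t` to `R`, and every other point to `c`. -/
theorem lift_of_urysohn_function (X : Type) [TopologicalSpace X] (s t : Set X)
    (hs : IsClosed s) (ht : IsClosed t) (hst : Disjoint s t)
    (f : X → unitInterval) (hf : Continuous f)
    (hf0 : ∀ x ∈ s, f x = 0) (hf1 : ∀ x ∈ t, f x = 1)
    (lam : X → I01)
    (hlam_s : ∀ x ∈ s, lam x = Sum.inr false)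
    (hlam_t : ∀ x ∈ t, lam x = Sum.inr true)
    (hlam_o : ∀ x, x ∉ s → x ∉ t → lam x = Sum.inl (f x)) :
    Continuous lam ∧ iota ∘ lam = f ∧
      (∀ x ∈ s, pi1 (lam x) = V.L) ∧ (∀ x ∈ t, pi1 (lam x) = V.R) ∧
      (∀ x, x ∉ s → x ∉ t → pi1 (lam x) = V.c) :=
  lift_of_urysohn_function_general X s t hs ht f hf hf0 hf1 lam hlam_s hlam_t hlam_o
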